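/- Let G be a non-trivial game on n binary players with 0 < π(G) < π̂(G), where π̂(G) is the empirical proportion of equilibria from a dataset of m ≥ 1 samples, and set q̂ = min(π̂(G), 1 − 1/(2m)). Then the average log-likelihood satisfies L̂(G, q̂) > −π̂(G)·log π(G) − KL(π̂(G)‖q̂) − (n+1)·log 2, where moreover KL(π̂(G)‖q̂) = 0 if π̂(G) < 1, and KL(π̂(G)‖q̂) = −log(1 − 1/(2m)) ≤ log 2 if π̂(G) = 1. -/

import Mathlib

open Finset
open scoped Classical BigOperators

/-- The hypercube `{-1,+1}^n` of joint actions, as a finite set of real vectors. -/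
noncomputable def cube (n : ℕ) : Finset (Fin n → ℝ) :=
  (Finset.univ : Finset (Fin n → Bool)).image (fun s i => if s i then (1 : ℝ) else -1)

/-- The generative-model PMF `p_{(N,q)}(x) = q·1[x∈N]/|N| + (1−q)·1[x∉N]/(2^n − |N|)`. -/
noncomputable def gpmf (n : ℕ) (N : Finset (Fin n → ℝ)) (q : ℝ) (x : Fin n → ℝ) : ℝ :=
  q * (if x ∈ N then 1 else 0) / (N.card : ℝ) +
    (1 - q) * (if x ∉ N then 1 else 0) / ((2 : ℝ) ^ n - (N.card : ℝ))

/-- KL divergence between Bernoulli distributions. -/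
noncomputable def klBer (p1 p2 : ℝ) : ℝ :=
  p1 * Real.log (p1 / p2) + (1 - p1) * Real.log ((1 - p1) / (1 - p2))

/-- Empirical proportion of equilibria `π̂(G) = (1/m) ∑_l 1[x^{(l)} ∈ NE(G)]`. -/
noncomputable def piHat (n m : ℕ) (N : Finset (Fin n → ℝ)) (xs : Fin m → Fin n → ℝ) : ℝ :=
  (1 / (m : ℝ)) * ∑ l, (if xs l ∈ N then 1 else 0)

/-- Average log-likelihood `L̂(G,q) = (1/m) ∑_l log p_{(G,q)}(x^{(l)})`. -/
noncomputable def avgLL (n m : ℕ) (N : Finset (Fin n → ℝ)) (q : ℝ)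
    (xs : Fin m → Fin n → ℝ) : ℝ :=
  (1 / (m : ℝ)) * ∑ l, Real.log (gpmf n N q (xs l))

/-! Write `|NE(G)| = π·2ⁿ` and `p = π̂(G)`. Then
`L̂(G,q) = p log q + (1-p) log (1-q) - p log π - (1-p) log (1-π) - n log 2`, and
`p log q + (1-p) log (1-q) = -KL(p‖q) - H(p)`. The bound follows from `H(p) ≤ log 2` and
`-(1-p) log (1-π) ≥ 0`; it is strict because that term is positive when `p < 1`, while `H(p) = 0`
when `p = 1`. An empirical frequency `p < 1` is at most `1 - 1/m`, so then `q̂ = p` and the KL term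
vanishes. -/

open Real

lemma mul_log_div_eq_sub (a : ℝ) {b : ℝ} (hb : b ≠ 0) :
    a * log (a / b) = a * log a - a * log b := by
  rcases eq_or_ne a 0 with rfl | ha
  · simp
  · rw [log_div ha hb, mul_sub]

lemma klBer_self (p : ℝ) : klBer p p = 0 := by
  simp [klBer]

lemma klBer_one_left (q : ℝ) : klBer 1 q = -log q := by
  simp [klBer]

lemma klBer_eq_neg_binEntropy_sub {q : ℝ} (hq₀ : q ≠ 0) (hq₁ : 1 - q ≠ 0) (p : ℝ) :
    klBer p q = -binEntropy p - (p * log q + (1 - p) * log (1 - q)) := by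
  rw [klBer, mul_log_div_eq_sub p hq₀, mul_log_div_eq_sub (1 - p) hq₁, binEntropy,
    log_inv, log_inv]
  ring

lemma neg_mul_log_sub_klBer_sub_lt {p q ρ c : ℝ} (hp : p ≤ 1) (hq₀ : 0 < q) (hq₁ : q < 1)
    (hρ₀ : 0 < ρ) (hρ₁ : ρ < 1) (hc : 0 < c) :
    -p * log ρ - klBer p q - (log 2 + log c) <
      p * log (q / (ρ * c)) + (1 - p) * log ((1 - q) / ((1 - ρ) * c)) := by
  have hρ₁' : 0 < 1 - ρ := by linarith
  rw [klBer_eq_neg_binEntropy_sub hq₀.ne' (by linarith), log_div hq₀.ne' (by positivity),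
    log_div (by linarith) (by positivity), log_mul hρ₀.ne' hc.ne', log_mul hρ₁'.ne' hc.ne']
  suffices binEntropy p + (1 - p) * log (1 - ρ) < log 2 by linarith
  rcases hp.lt_or_eq with hp | rfl
  · have : (1 - p) * log (1 - ρ) < 0 :=
      mul_neg_of_pos_of_neg (by linarith) (log_neg hρ₁' (by linarith))
    linarith [binEntropy_le_log_two (p := p)]
  · simpa using log_pos one_lt_two

variable {n m : ℕ} (N : Finset (Fin n → ℝ)) (xs : Fin m → Fin n → ℝ)

lemma piHat_eq_card_div : piHat n m N xs = #{l | xs l ∈ N} / m := by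
  rw [piHat, sum_boole]
  ring

lemma piHat_le_one : piHat n m N xs ≤ 1 := by
  rw [piHat_eq_card_div]
  refine div_le_one_of_le₀ ?_ m.cast_nonneg
  exact_mod_cast (card_filter_le _ _).trans (card_fin m).le

lemma piHat_le_one_sub_of_lt_one (h : piHat n m N xs < 1) :
    piHat n m N xs ≤ 1 - 1 / (2 * m) := by
  rcases eq_or_ne m 0 with rfl | hm
  · simp [piHat]
  have hm' : (0 : ℝ) < m := by positivity
  rw [piHat_eq_card_div, div_lt_one hm'] at h
  have hk : (#{l | xs l ∈ N} : ℝ) + 1 ≤ m := by exact_mod_cast Nat.cast_lt.mp h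
  rw [piHat_eq_card_div, div_le_iff₀ hm']
  have : (1 - 1 / (2 * m)) * (m : ℝ) = m - 1 / 2 := by field_simp
  linarith

lemma log_gpmf (q : ℝ) (x : Fin n → ℝ) :
    log (gpmf n N q x) = log ((1 - q) / (2 ^ n - N.card)) +
      (if x ∈ N then 1 else 0) * (log (q / N.card) - log ((1 - q) / (2 ^ n - N.card))) := by
  by_cases hx : x ∈ N <;> simp [gpmf, hx]

lemma avgLL_eq {q : ℝ} (hm : m ≠ 0) :
    avgLL n m N q xs = piHat n m N xs * log (q / N.card) +
      (1 - piHat n m N xs) * log ((1 - q) / (2 ^ n - N.card)) := by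
  simp only [avgLL, piHat, log_gpmf, sum_add_distrib, sum_const, card_univ, Fintype.card_fin,
    nsmul_eq_mul, ← sum_mul]
  field_simp
  ring

theorem stmt9_general (n m : ℕ) (hm : 1 ≤ m) (N : Finset (Fin n → ℝ))
    (xs : Fin m → Fin n → ℝ)
    (hpos : 0 < (N.card : ℝ) / 2 ^ n)
    (hlt : (N.card : ℝ) / 2 ^ n < piHat n m N xs) :
    (avgLL n m N (min (piHat n m N xs) (1 - 1 / (2 * (m : ℝ)))) xs >
      -piHat n m N xs * Real.log ((N.card : ℝ) / 2 ^ n) -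
        klBer (piHat n m N xs) (min (piHat n m N xs) (1 - 1 / (2 * (m : ℝ)))) -
        ((n : ℝ) + 1) * Real.log 2) ∧
    (piHat n m N xs < 1 →
      klBer (piHat n m N xs) (min (piHat n m N xs) (1 - 1 / (2 * (m : ℝ)))) = 0) ∧
    (piHat n m N xs = 1 →
      klBer (piHat n m N xs) (min (piHat n m N xs) (1 - 1 / (2 * (m : ℝ)))) =
          -Real.log (1 - 1 / (2 * (m : ℝ))) ∧
        -Real.log (1 - 1 / (2 * (m : ℝ))) ≤ Real.log 2) := by
  set p := piHat n m N xs
  set ρ := (N.card : ℝ) / 2 ^ n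
  have hp₁ : p ≤ 1 := piHat_le_one N xs
  have hε₀ : 0 < 1 / (2 * (m : ℝ)) := by positivity
  have hε₁ : 1 / (2 * (m : ℝ)) ≤ 1 / 2 := by gcongr; norm_cast; omega
  refine ⟨?_, fun h ↦ ?_, fun h ↦ ⟨?_, ?_⟩⟩
  · have hq₀ : 0 < min p (1 - 1 / (2 * (m : ℝ))) := lt_min (hpos.trans hlt) (by linarith)
    have hq₁ : min p (1 - 1 / (2 * (m : ℝ))) < 1 := (min_le_right _ _).trans_lt (by linarith)
    have hcard : (N.card : ℝ) = ρ * 2 ^ n := (div_mul_cancel₀ _ (by positivity)).symm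
    have := neg_mul_log_sub_klBer_sub_lt hp₁ hq₀ hq₁ hpos (hlt.trans_le hp₁)
      (pow_pos two_pos n)
    rw [log_pow] at this
    rw [avgLL_eq N xs (by omega), hcard, ← one_sub_mul]
    linarith
  · rw [min_eq_left (piHat_le_one_sub_of_lt_one N xs h), klBer_self]
  · rw [h, min_eq_right (by linarith), klBer_one_left]
  · rw [← log_inv]
    exact log_le_log (inv_pos.mpr (by linarith)) (inv_le_of_inv_le₀ two_pos (by linarith))

/-- for a non-trivial game with `0 < π(G) < π̂(G)` and
`q̂ = min(π̂(G), 1 − 1/(2m))`, the average log-likelihood satisfies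
`L̂(G,q̂) > −π̂ log π − KL(π̂‖q̂) − (n+1) log 2`, where `KL(π̂‖q̂) = 0` if `π̂ < 1` and
`KL(π̂‖q̂) = −log(1 − 1/(2m)) ≤ log 2` if `π̂ = 1`. -/
theorem stmt9 (n m : ℕ) (hm : 1 ≤ m) (N : Finset (Fin n → ℝ)) (hsub : N ⊆ cube n)
    (xs : Fin m → Fin n → ℝ) (hxs : ∀ l, xs l ∈ cube n)
    (hpos : 0 < (N.card : ℝ) / 2 ^ n)
    (hlt : (N.card : ℝ) / 2 ^ n < piHat n m N xs) :
    (avgLL n m N (min (piHat n m N xs) (1 - 1 / (2 * (m : ℝ)))) xs >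
      -piHat n m N xs * Real.log ((N.card : ℝ) / 2 ^ n) -
        klBer (piHat n m N xs) (min (piHat n m N xs) (1 - 1 / (2 * (m : ℝ)))) -
        ((n : ℝ) + 1) * Real.log 2) ∧
    (piHat n m N xs < 1 →
      klBer (piHat n m N xs) (min (piHat n m N xs) (1 - 1 / (2 * (m : ℝ)))) = 0) ∧
    (piHat n m N xs = 1 →
      klBer (piHat n m N xs) (min (piHat n m N xs) (1 - 1 / (2 * (m : ℝ)))) =
          -Real.log (1 - 1 / (2 * (m : ℝ))) ∧
        -Real.log (1 - 1 / (2 * (m : ℝ))) ≤ Real.log 2) :=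
  stmt9_general n m hm N xs hpos hlt
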